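/- arXiv:2403.07890 — 2 statements merged into one kernel-verified Lean document; each statement's English description precedes it below -/
import Mathlib

section
/- For the step sizes α_t = (H+1)/(H+t), one has ∑_{j=1}^t α_t^j (α_j)^2 ≤ 3H/t for every t ≥ 1. -/
/-!
Write `S_t = ∑_{j ≤ t} α_t^j α_j²`. Since `α_{t+1}^j = (1 - α_{t+1}) α_t^j` for `j ≤ t` and
`α_{t+1}^{t+1} = α_{t+1}`, one has `S_{t+1} = (1 - α_{t+1}) S_t + α_{t+1}³`, so the bound `3H/t`
propagates by induction as soon as `3H/(H+u) + ((H+1)/(H+u))³ ≤ 3H/u`. Clearing denominators this is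
`u (H+1)³ ≤ 3H² (H+u)²`, which follows from `(H+1)³ ≤ 8H³` and `4Hu ≤ (H+u)²`.
-/

open Finset

noncomputable def stepWeight (α : ℕ → ℝ) (t j : ℕ) : ℝ :=
  α j * ∏ j' ∈ Ioc j t, (1 - α j')

theorem sum_stepWeight_succ (α f : ℕ → ℝ) (t : ℕ) :
    ∑ j ∈ Icc 1 (t + 1), stepWeight α (t + 1) j * f j
      = (1 - α (t + 1)) * ∑ j ∈ Icc 1 t, stepWeight α t j * f j + α (t + 1) * f (t + 1) := by
  have h_old : ∀ j ∈ Icc 1 t,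
      stepWeight α (t + 1) j * f j = (1 - α (t + 1)) * (stepWeight α t j * f j) := by
    intro j hj
    rw [stepWeight, stepWeight, prod_Ioc_succ_top (mem_Icc.mp hj).2]
    ring
  rw [sum_Icc_succ_top (by omega), sum_congr rfl h_old, ← mul_sum, stepWeight, Ioc_self,
    prod_empty, mul_one]

theorem mul_add_one_pow_three_le {H u : ℝ} (hH : 1 ≤ H) (hu : 0 ≤ u) :
    u * (H + 1) ^ 3 ≤ 3 * H ^ 2 * (H + u) ^ 2 :=
  calc u * (H + 1) ^ 3 ≤ u * (12 * H ^ 3) := by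
        gcongr
        nlinarith [pow_le_pow_left₀ (by linarith) (by linarith : H + 1 ≤ 2 * H) 3]
    _ = 3 * H ^ 2 * (4 * H * u) := by ring
    _ ≤ 3 * H ^ 2 * (H + u) ^ 2 := by gcongr; exact four_mul_le_sq_add H u

theorem three_mul_div_add_cube_le {H u : ℝ} (hH : 1 ≤ H) (hu : 0 < u) :
    3 * H / (H + u) + ((H + 1) / (H + u)) ^ 3 ≤ 3 * H / u := by
  have hHu : 0 < H + u := by linarith
  rw [div_pow, div_add_div _ _ hHu.ne' (by positivity), div_le_div_iff₀ (by positivity) hu]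
  nlinarith [mul_add_one_pow_three_le hH hu.le, pow_pos hHu 3]

/-- For step sizes `α j = (H+1)/(H+j)`, one has `∑_{j=1}^t α_t^j (α_j)^2 ≤ 3H/t`. -/
theorem weighted_sq_stepsize_sum (H : ℕ) (hH : 1 ≤ H)
    (α : ℕ → ℝ) (hα : ∀ j, α j = (H + 1) / (H + j))
    (αw : ℕ → ℕ → ℝ)
    (hαw : ∀ t j, αw t j = α j * ∏ j' ∈ Finset.Ioc j t, (1 - α j')) :
    ∀ t : ℕ, 1 ≤ t → ∑ j ∈ Finset.Icc 1 t, αw t j * (α j) ^ 2 ≤ 3 * H / t := by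
  obtain rfl : αw = stepWeight α := funext₂ hαw
  have hH' : (1 : ℝ) ≤ H := by exact_mod_cast hH
  -- The induction starts at `t = 0`, where both sides are `0` (the right one since `x / 0 = 0`).
  suffices ∀ t : ℕ, ∑ j ∈ Icc 1 t, stepWeight α t j * α j ^ 2 ≤ 3 * H / t from fun t _ => this t
  intro t
  induction t with
  | zero => simp
  | succ t ih =>
    have ht : (0 : ℝ) < t + 1 := by positivity
    have h_new : α (t + 1) = (H + 1) / (H + (t + 1)) := by rw [hα]; push_cast; rfl
    have h_keep : 1 - α (t + 1) = t / (H + (t + 1)) := by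
      rw [h_new]; field_simp; ring
    have h_shrink : (t : ℝ) / (H + (t + 1)) * (3 * H / t) ≤ 3 * H / (H + (t + 1)) := by
      rcases eq_or_ne (t : ℝ) 0 with h0 | h0
      · rw [h0, zero_div, zero_mul]; positivity
      · rw [div_mul_div_cancel₀' h0]
    rw [sum_stepWeight_succ, h_keep, Nat.cast_succ]
    calc _ = (t : ℝ) / (H + (t + 1)) * ∑ j ∈ Icc 1 t, stepWeight α t j * α j ^ 2
          + α (t + 1) ^ 3 := by ring
      _ ≤ t / (H + (t + 1)) * (3 * H / t) + α (t + 1) ^ 3 := by gcongr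
      _ ≤ 3 * H / (H + (t + 1)) + ((H + 1) / (H + (t + 1))) ^ 3 := by rw [h_new]; exact add_le_add_left h_shrink _
      _ ≤ 3 * H / (t + 1) := three_mul_div_add_cube_le hH' ht
end

section
/- For the step sizes α_t = (H+1)/(H+t), the weighted harmonic sum satisfies ∑_{j=1}^t α_t^j / j ≤ (1 + 1/H)·(1/t) for every t ≥ 1. -/
/-!
Writing `S t = ∑_{j ≤ t} α_t^j / j`, the weights satisfy `α_{t+1}^j = (1 - α_{t+1}) α_t^j` for
`j ≤ t` and `α_{t+1}^{t+1} = α_{t+1}`, so `S (t+1) = (1 - α_{t+1}) S t + α_{t+1} / (t+1)`.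
The bound `B t = (1 + 1/H)/t` is an exact fixed point of this recursion for `t ≥ 1`, and
`S 1 = 1 ≤ B 1`; since `1 - α_{t+1} ≥ 0` the inequality propagates by induction.
-/

open Finset

theorem sum_Icc_mul_prod_one_sub_succ {R : Type*} [CommRing R] (α g : ℕ → R) (t : ℕ) :
    ∑ j ∈ Icc 1 (t + 1), α j * (∏ j' ∈ Ioc j (t + 1), (1 - α j')) * g j =
      (1 - α (t + 1)) * ∑ j ∈ Icc 1 t, α j * (∏ j' ∈ Ioc j t, (1 - α j')) * g j +
        α (t + 1) * g (t + 1) := by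
  rw [sum_Icc_succ_top (by omega), mul_sum, Ioc_self, prod_empty, mul_one]
  congr 1
  refine sum_congr rfl fun j hj => ?_
  rw [prod_Ioc_succ_top (mem_Icc.mp hj).2]
  ring

theorem one_sub_stepSize_nonneg {h t : ℝ} (hh : 0 < h) (ht : 0 ≤ t) :
    0 ≤ 1 - (h + 1) / (h + (t + 1)) := by
  rw [sub_nonneg, div_le_one (by linarith)]
  linarith

theorem stepSize_recursion_fixedPoint {h t : ℝ} (hh : 0 < h) (ht : 0 < t) :
    (1 - (h + 1) / (h + (t + 1))) * ((1 + 1 / h) * (1 / t)) + (h + 1) / (h + (t + 1)) / (t + 1) =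
      (1 + 1 / h) * (1 / (t + 1)) := by
  field_simp
  ring

/-- For step sizes `α j = (H+1)/(H+j)`, the weighted harmonic sum satisfies
`∑_{j=1}^t α_t^j / j ≤ (1 + 1/H) · (1/t)`. -/
theorem weighted_harmonic_sum (H : ℕ) (hH : 1 ≤ H)
    (α : ℕ → ℝ) (hα : ∀ j, α j = (H + 1) / (H + j))
    (αw : ℕ → ℕ → ℝ)
    (hαw : ∀ t j, αw t j = α j * ∏ j' ∈ Finset.Ioc j t, (1 - α j')) :
    ∀ t : ℕ, 1 ≤ t →
      ∑ j ∈ Finset.Icc 1 t, αw t j / j ≤ (1 + 1 / (H : ℝ)) * (1 / t) := by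
  have hHpos : (0 : ℝ) < H := by exact_mod_cast hH
  simp only [hαw, div_eq_mul_inv (α _ * _)]
  intro t ht
  induction t, ht using Nat.le_induction with
  | base =>
    have hα1 : α 1 = 1 := by rw [hα, Nat.cast_one, div_self (by positivity)]
    simp only [Icc_self, sum_singleton, Ioc_self, prod_empty, hα1, Nat.cast_one]
    have : (0 : ℝ) ≤ 1 / H := by positivity
    linarith
  | succ n hn ih =>
    have hn0 : (0 : ℝ) < n := by exact_mod_cast hn
    have hαn : α (n + 1) = (H + 1) / (H + (n + 1)) := by rw [hα]; push_cast; rfl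
    calc _ = (1 - α (n + 1)) * ∑ j ∈ Icc 1 n, α j * (∏ j' ∈ Ioc j n, (1 - α j')) * (j : ℝ)⁻¹ +
          α (n + 1) / (n + 1) := by
            rw [sum_Icc_mul_prod_one_sub_succ, div_eq_mul_inv]; push_cast; rfl
      _ ≤ (1 - α (n + 1)) * ((1 + 1 / H) * (1 / n)) + α (n + 1) / (n + 1) := by
            gcongr
            rw [hαn]
            exact one_sub_stepSize_nonneg hHpos hn0.le
      _ = (1 + 1 / H) * (1 / ((n + 1 : ℕ) : ℝ)) := by
            rw [hαn, stepSize_recursion_fixedPoint hHpos hn0]; push_cast; rfl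
end
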